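/- arXiv:1403.5459 — 2 statements merged into one kernel-verified Lean document; each statement's English description precedes it below -/
import Mathlib

section
/- For every point z on the boundary of a finite cone C_{ρ,h}(u) with vertex u, opening angle ρ ∈ (0,π] and height h, there exists a finite cone with vertex z, opening angle ρ' and height h' contained in C_{ρ,h}(u), where h' = (h/2)·sin(ρ/2) and ρ' = (π−ρ)/2 if ρ > π/3, ρ' = ρ if ρ ≤ π/3. -/
open MeasureTheory Metric Set Filter

noncomputable section

/-- The open finite cone with vertex `x`, axis `ξ`, opening angle `ρ` and height `h`. -/
def fcone (d : ℕ) (ρ h : ℝ) (x ξ : EuclideanSpace ℝ (Fin d)) :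
    Set (EuclideanSpace ℝ (Fin d)) :=
  {z | z ≠ x ∧ (inner ℝ ξ (‖z - x‖⁻¹ • (z - x)) : ℝ) > Real.cos (ρ / 2)} ∩ Metric.ball x h

/-- `S` is `ρ,h`-cone-convex. -/
def ConeConvex (d : ℕ) (ρ h : ℝ) (S : Set (EuclideanSpace ℝ (Fin d))) : Prop :=
  ∀ x ∈ frontier S, ∃ ξ : EuclideanSpace ℝ (Fin d), ‖ξ‖ = 1 ∧ fcone d ρ h x ξ ⊆ Sᶜ

/-- The `ρ,h`-cone-convex hull by complement. -/
def cccHull (d : ℕ) (ρ h : ℝ) (S : Set (EuclideanSpace ℝ (Fin d))) :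
    Set (EuclideanSpace ℝ (Fin d)) :=
  ⋂₀ {A | ∃ y ξ : EuclideanSpace ℝ (Fin d),
      ‖ξ‖ = 1 ∧ fcone d ρ h y ξ ∩ S = ∅ ∧ A = (fcone d ρ h y ξ)ᶜ}

/-- The `ρ,h`-cone-convex hull: intersection of all compact `ρ,h`-cone-convex supersets. -/
def ccHull (d : ℕ) (ρ h : ℝ) (S : Set (EuclideanSpace ℝ (Fin d))) :
    Set (EuclideanSpace ℝ (Fin d)) :=
  ⋂₀ {B | S ⊆ B ∧ IsCompact B ∧ B.Nonempty ∧ ConeConvex d ρ h B}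

/-!
Put `s = sin (ρ / 2)` and `L = h / (1 + s)`. The ball `B` of radius `L s` centred at `u + L ξ` is
inscribed in `C = C_{ρ,h}(u)`. Since `C` is open and convex and `z ∈ closure C`, every half-open
segment from `z` to a point of `B` lies in `C`. If `D` is the distance from `z` to the centre of
`B`, these segments fill the cone with vertex `z` aimed at that centre, of any half-angle `θ / 2`
with `D sin (θ / 2) ≤ L s`, truncated at height `D cos (θ / 2)`. As `z ∉ B`, `D ≥ L s`, and `D` is
at most the larger of the distances from the centre to the vertex and to the rim of `C`; for the
given `ρ'` and `h'` what remains are elementary trigonometric inequalities.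
-/

open Real RealInnerProductSpace

variable {d : ℕ}

theorem fcone_eq (ρ h : ℝ) (x ξ : EuclideanSpace ℝ (Fin d)) :
    fcone d ρ h x ξ = {w | cos (ρ / 2) * ‖w - x‖ < ⟪ξ, w - x⟫} ∩ ball x h := by
  ext w
  simp only [fcone, mem_inter_iff, mem_ofPred_eq, real_inner_smul_right, gt_iff_lt,
    ← div_eq_inv_mul]
  rcases eq_or_ne w x with rfl | hw
  · simp
  · rw [lt_div_iff₀ (norm_pos_iff.2 (sub_ne_zero.2 hw))]
    simp [hw]

theorem mem_fcone_iff {ρ h : ℝ} {x ξ w : EuclideanSpace ℝ (Fin d)} :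
    w ∈ fcone d ρ h x ξ ↔ cos (ρ / 2) * ‖w - x‖ < ⟪ξ, w - x⟫ ∧ ‖w - x‖ < h := by
  rw [fcone_eq, mem_inter_iff, mem_ball, dist_eq_norm, mem_ofPred_eq]

theorem isOpen_fcone (ρ h : ℝ) (x ξ : EuclideanSpace ℝ (Fin d)) : IsOpen (fcone d ρ h x ξ) := by
  rw [fcone_eq]
  exact (isOpen_lt (by fun_prop) (by fun_prop)).inter isOpen_ball

theorem convex_fcone {ρ : ℝ} (h : ℝ) (x ξ : EuclideanSpace ℝ (Fin d)) (hρ : 0 ≤ cos (ρ / 2)) :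
    Convex ℝ (fcone d ρ h x ξ) := by
  have hf : ConvexOn ℝ univ fun w => cos (ρ / 2) * dist w x - ⟪ξ, w - x⟫ := by
    refine ((convexOn_univ_dist x).smul hρ).sub ?_
    simp only [inner_sub_right]
    exact ((innerₛₗ ℝ ξ).concaveOn convex_univ).sub (convexOn_const _ convex_univ)
  rw [fcone_eq]
  refine Convex.inter ?_ (convex_ball x h)
  simpa [dist_eq_norm] using hf.convex_lt 0

theorem closure_fcone_subset (ρ h : ℝ) (x ξ : EuclideanSpace ℝ (Fin d)) :
    closure (fcone d ρ h x ξ) ⊆ {w | cos (ρ / 2) * ‖w - x‖ ≤ ⟪ξ, w - x⟫} ∩ closedBall x h := by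
  refine closure_minimal ?_ ((isClosed_le (by fun_prop) (by fun_prop)).inter isClosed_closedBall)
  rw [fcone_eq]
  exact inter_subset_inter (ofPred_subset_ofPred.2 fun _ => LT.lt.le) ball_subset_closedBall

theorem cos_mul_norm_lt_inner_smul_add {E : Type*} [NormedAddCommGroup E] [InnerProductSpace ℝ E]
    {ξ p : E} {θ L : ℝ} (hξ : ‖ξ‖ = 1) (hθ : 0 ≤ cos θ) (hL : 0 < L) (hp : ‖p‖ < L * sin θ) :
    cos θ * ‖L • ξ + p‖ < ⟪ξ, L • ξ + p⟫ := by
  have hξp : |⟪ξ, p⟫| ≤ ‖p‖ := by simpa [hξ] using abs_real_inner_le_norm ξ p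
  have hinner : ⟪ξ, L • ξ + p⟫ = L + ⟪ξ, p⟫ := by
    rw [inner_add_right, real_inner_smul_right, real_inner_self_eq_norm_sq, hξ]
    ring
  have hnorm : ‖L • ξ + p‖ ^ 2 = L ^ 2 + 2 * L * ⟪ξ, p⟫ + ‖p‖ ^ 2 := by
    rw [norm_add_sq_real, norm_smul, real_inner_smul_left, Real.norm_eq_abs, abs_of_pos hL, hξ]
    ring
  have hpos : 0 < L + ⟪ξ, p⟫ := by
    nlinarith [(abs_le.1 hξp).1, sin_le_one θ]
  rw [hinner]
  rcases hθ.eq_or_lt with hc | hc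
  · rwa [← hc, zero_mul]
  refine lt_of_pow_lt_pow_left₀ 2 hpos.le ?_
  -- with `a = ⟪ξ, p⟫`:
  -- `(L + a)² - cos² θ ‖L • ξ + p‖² = (a + L sin² θ)² + cos² θ (L² sin² θ - ‖p‖²)`
  have hp2 : ‖p‖ ^ 2 < (L * sin θ) ^ 2 := pow_lt_pow_left₀ hp (norm_nonneg p) two_ne_zero
  rw [mul_pow, hnorm]
  nlinarith [sin_sq_add_cos_sq θ, sq_nonneg (⟪ξ, p⟫ + sin θ ^ 2 * L),
    mul_pos (pow_pos hc 2) (sub_pos.2 hp2)]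

theorem ball_subset_fcone {ρ h L : ℝ} {x ξ : EuclideanSpace ℝ (Fin d)} (hξ : ‖ξ‖ = 1)
    (hρ : 0 ≤ cos (ρ / 2)) (hL : 0 < L) (hLh : L * (1 + sin (ρ / 2)) ≤ h) :
    ball (x + L • ξ) (L * sin (ρ / 2)) ⊆ fcone d ρ h x ξ := by
  intro b hb
  rw [mem_ball, dist_eq_norm] at hb
  have hbx : b - x = L • ξ + (b - (x + L • ξ)) := by abel
  refine mem_fcone_iff.2 ⟨hbx ▸ cos_mul_norm_lt_inner_smul_add hξ hρ hL hb, ?_⟩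
  calc ‖b - x‖ ≤ ‖L • ξ‖ + ‖b - (x + L • ξ)‖ := hbx ▸ norm_add_le _ _
    _ < L + L * sin (ρ / 2) := by
      rw [norm_smul, Real.norm_eq_abs, abs_of_pos hL, hξ, mul_one]
      linarith
    _ ≤ h := by linarith

theorem dist_sq_le_of_mem_closure_fcone {ρ h L : ℝ} {x ξ z : EuclideanSpace ℝ (Fin d)}
    (hξ : ‖ξ‖ = 1) (hL : 0 ≤ L) (hz : z ∈ closure (fcone d ρ h x ξ)) :
    dist z (x + L • ξ) ^ 2 ≤ max (L ^ 2) (L ^ 2 + h ^ 2 - 2 * L * cos (ρ / 2) * h) := by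
  obtain ⟨hangle, hr⟩ := closure_fcone_subset ρ h x ξ hz
  rw [mem_ofPred_eq] at hangle
  rw [mem_closedBall, dist_eq_norm] at hr
  have hdist : dist z (x + L • ξ) ^ 2 = ‖z - x‖ ^ 2 - 2 * L * ⟪ξ, z - x⟫ + L ^ 2 := by
    rw [dist_eq_norm, show z - (x + L • ξ) = (z - x) - L • ξ by abel, norm_sub_sq_real, norm_smul,
      real_inner_smul_right, Real.norm_eq_abs, abs_of_nonneg hL, hξ, real_inner_comm]
    ring
  rw [hdist]
  have hτ := mul_le_mul_of_nonneg_left hangle hL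
  rcases le_or_gt ‖z - x‖ (2 * L * cos (ρ / 2)) with hsmall | hbig
  · refine le_max_of_le_left ?_
    nlinarith [norm_nonneg (z - x)]
  · refine le_max_of_le_right ?_
    nlinarith [mul_nonneg (sub_nonneg.2 hr) (by linarith [norm_nonneg (z - x)] :
      (0 : ℝ) ≤ h + ‖z - x‖ - 2 * L * cos (ρ / 2))]

theorem norm_div_smul_sub_sq {E : Type*} [NormedAddCommGroup E] [InnerProductSpace ℝ E]
    (q : E) {v : E} (hv : v ≠ 0) :
    ‖(⟪q, v⟫ / ‖v‖ ^ 2) • v - q‖ ^ 2 = ‖q‖ ^ 2 - (⟪q, v⟫ / ‖v‖) ^ 2 := by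
  have : ‖v‖ ≠ 0 := norm_ne_zero_iff.2 hv
  rw [norm_sub_sq_real, norm_smul, real_inner_smul_left, Real.norm_eq_abs, mul_pow, sq_abs,
    real_inner_comm]
  field_simp
  ring

theorem fcone_subset_interior_of_ball_subset {θ h' R : ℝ} {K : Set (EuclideanSpace ℝ (Fin d))}
    {z m : EuclideanSpace ℝ (Fin d)} (hK : Convex ℝ K) (hz : z ∈ closure K)
    (hball : ball m R ⊆ interior K) (hθ : 0 ≤ sin (θ / 2)) (hR : sin (θ / 2) * ‖m - z‖ ≤ R)
    (hh' : h' ≤ cos (θ / 2) * ‖m - z‖) :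
    fcone d θ h' z (‖m - z‖⁻¹ • (m - z)) ⊆ interior K := by
  intro y hy
  obtain ⟨hangle, hlen⟩ := mem_fcone_iff.1 hy
  set q := m - z
  set v := y - z
  have hv : v ≠ 0 := by
    rintro hv
    simp [hv] at hangle
  have hvpos : 0 < ‖v‖ := norm_pos_iff.2 hv
  have hq : 0 < ‖q‖ := by
    refine (norm_nonneg q).lt_of_ne fun hq => ?_
    rw [← hq, mul_zero] at hh'
    linarith [norm_nonneg v]
  set a := ⟪q, v⟫ / ‖v‖
  have ha : cos (θ / 2) * ‖q‖ < a := by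
    rw [real_inner_smul_left, inv_mul_eq_div, lt_div_iff₀ hq] at hangle
    rw [lt_div_iff₀ hvpos]
    linarith
  -- `b` is the foot of the perpendicular from `m` to the ray through `y`; it lies beyond `y`
  set μ := ⟪q, v⟫ / ‖v‖ ^ 2
  have hμa : μ = a / ‖v‖ := by simp only [μ, a]; field_simp
  have hμ : 1 < μ := by
    rw [hμa, one_lt_div hvpos]
    linarith
  have hb : z + μ • v ∈ interior K := by
    refine hball ?_
    rw [mem_ball, dist_eq_norm, show z + μ • v - m = μ • v - q by simp only [q]; abel]
    refine lt_of_pow_lt_pow_left₀ 2 (le_trans (by positivity) hR) ?_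
    rw [norm_div_smul_sub_sq q hv]
    have hca : (cos (θ / 2) * ‖q‖) ^ 2 < a ^ 2 :=
      pow_lt_pow_left₀ ha (by linarith [norm_nonneg v]) two_ne_zero
    nlinarith [sin_sq_add_cos_sq (θ / 2), pow_le_pow_left₀ (by positivity) hR 2]
  have hy : y = z + μ⁻¹ • (μ • v) := by
    rw [smul_smul, inv_mul_cancel₀ (by positivity), one_smul, add_sub_cancel]
  rw [hy]
  exact hK.add_smul_mem_interior' hz hb ⟨by positivity, inv_le_one_of_one_le₀ hμ.le⟩

/-- With `s = sin (ρ / 2)`, `c = cos (ρ / 2)` and `L = h / (1 + s)`, a point of `∂C_{ρ,h}(u)` lies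
at distance between `L s` and `L · max 1 √(1 + (1 + s)² - 2 c (1 + s))` (vertex, resp. rim) from
the centre `u + L ξ` of the inscribed ball. These conditions say that, seen from such a point, the
ball subtends an angle at least `ρ'` and the tangent points lie farther than `h s / 2`. -/
structure ApertureFits (ρ ρ' : ℝ) : Prop where
  sin_nonneg : 0 ≤ sin (ρ' / 2)
  sin_le : sin (ρ' / 2) ≤ sin (ρ / 2)
  one_add_sin_le : 1 + sin (ρ / 2) ≤ 2 * cos (ρ' / 2)
  sin_sq_mul_le :
    sin (ρ' / 2) ^ 2 * (1 + (1 + sin (ρ / 2)) ^ 2 - 2 * cos (ρ / 2) * (1 + sin (ρ / 2))) ≤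
      sin (ρ / 2) ^ 2

theorem exists_fcone_subset_of_mem_frontier {ρ ρ' h h' : ℝ} (hc : 0 ≤ cos (ρ / 2))
    (hs : 0 < sin (ρ / 2)) (hh : 0 < h) (hh' : h' ≤ h / 2 * sin (ρ / 2)) (hfit : ApertureFits ρ ρ')
    {u ξ z : EuclideanSpace ℝ (Fin d)} (hξ : ‖ξ‖ = 1) (hz : z ∈ frontier (fcone d ρ h u ξ)) :
    ∃ ν : EuclideanSpace ℝ (Fin d), ‖ν‖ = 1 ∧ fcone d ρ' h' z ν ⊆ fcone d ρ h u ξ := by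
  have hopen := isOpen_fcone ρ h u ξ
  rw [hopen.frontier_eq] at hz
  obtain ⟨hzc, hzC⟩ := hz
  set s := sin (ρ / 2)
  set L := h / (1 + s)
  have hL : 0 < L := by positivity
  have hLh : L * (1 + s) = h := div_mul_cancel₀ h (by positivity)
  set m := u + L • ξ
  have hball : ball m (L * s) ⊆ fcone d ρ h u ξ := ball_subset_fcone hξ hc hL hLh.le
  have hD_ge : L * s ≤ ‖m - z‖ := by
    rw [← dist_eq_norm, dist_comm]
    exact le_of_not_gt fun hlt => hzC (hball hlt)
  have hD_le : sin (ρ' / 2) * ‖m - z‖ ≤ L * s := by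
    have hD := dist_sq_le_of_mem_closure_fcone hξ hL.le hzc
    rw [dist_comm, dist_eq_norm] at hD
    have hrim : L ^ 2 + h ^ 2 - 2 * L * cos (ρ / 2) * h =
        L ^ 2 * (1 + (1 + s) ^ 2 - 2 * cos (ρ / 2) * (1 + s)) := by
      rw [← hLh]; ring
    rw [← pow_le_pow_iff_left₀ (mul_nonneg hfit.sin_nonneg (norm_nonneg _)) (by positivity)
      two_ne_zero, mul_pow, mul_pow]
    calc sin (ρ' / 2) ^ 2 * ‖m - z‖ ^ 2
        ≤ sin (ρ' / 2) ^ 2 * max (L ^ 2) (L ^ 2 + h ^ 2 - 2 * L * cos (ρ / 2) * h) := by gcongr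
      _ = max (sin (ρ' / 2) ^ 2 * L ^ 2)
          (sin (ρ' / 2) ^ 2 * (1 + (1 + s) ^ 2 - 2 * cos (ρ / 2) * (1 + s)) * L ^ 2) := by
        rw [mul_max_of_nonneg _ _ (sq_nonneg _), hrim]; ring_nf
      _ ≤ L ^ 2 * s ^ 2 := by
        rw [mul_comm (L ^ 2)]
        refine max_le (by gcongr; exacts [hfit.sin_nonneg, hfit.sin_le]) ?_
        gcongr
        exact hfit.sin_sq_mul_le
  have hh'_le : h' ≤ cos (ρ' / 2) * ‖m - z‖ := by
    have hc' : 0 ≤ cos (ρ' / 2) := by linarith [hfit.one_add_sin_le]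
    calc h' ≤ (1 + s) / 2 * (L * s) := by rw [← hLh] at hh'; linarith
      _ ≤ cos (ρ' / 2) * (L * s) := by gcongr; linarith [hfit.one_add_sin_le]
      _ ≤ cos (ρ' / 2) * ‖m - z‖ := by gcongr
  have hmz : m - z ≠ 0 := norm_pos_iff.1 (lt_of_lt_of_le (by positivity) hD_ge)
  refine ⟨‖m - z‖⁻¹ • (m - z), norm_smul_inv_norm hmz, ?_⟩
  rw [← hopen.interior_eq] at hball ⊢
  exact fcone_subset_interior_of_ball_subset (convex_fcone h u ξ hc) hzc hball hfit.sin_nonneg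
    hD_le hh'_le

theorem apertureFits_self {ρ : ℝ} (h₀ : 0 ≤ ρ) (h₁ : ρ ≤ π / 3) : ApertureFits ρ ρ := by
  have hs₀ : 0 ≤ sin (ρ / 2) := sin_nonneg_of_nonneg_of_le_pi (by linarith) (by linarith [pi_pos])
  have hs : sin (ρ / 2) ≤ 1 / 2 := by
    rw [← sin_pi_div_six]
    exact sin_le_sin_of_le_of_le_pi_div_two (by linarith [pi_pos]) (by linarith [pi_pos])
      (by linarith)
  have hc : √3 / 2 ≤ cos (ρ / 2) := by
    rw [← cos_pi_div_six]
    exact cos_le_cos_of_nonneg_of_le_pi (by linarith) (by linarith [pi_pos]) (by linarith)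
  have h3 : 3 / 2 ≤ √3 := (le_sqrt (by norm_num) (by norm_num)).2 (by norm_num)
  have hfit : 1 + sin (ρ / 2) ≤ 2 * cos (ρ / 2) := by linarith
  refine ⟨hs₀, le_rfl, hfit, ?_⟩
  have := mul_le_mul_of_nonneg_left hfit (by linarith : 0 ≤ 1 + sin (ρ / 2))
  nlinarith [mul_nonneg (sq_nonneg (sin (ρ / 2)))
    (by linarith : 0 ≤ 2 * cos (ρ / 2) * (1 + sin (ρ / 2)) - (1 + sin (ρ / 2)) ^ 2)]

theorem apertureFits_pi_sub_div_two {ρ : ℝ} (h₀ : π / 3 ≤ ρ) (h₁ : ρ ≤ π) :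
    ApertureFits ρ ((π - ρ) / 2) := by
  set β := (π - ρ) / 4
  have hβ' : (π - ρ) / 2 / 2 = β := by ring
  have hβρ : ρ / 2 = π / 2 - 2 * β := by ring
  have hx₀ : 0 ≤ sin β := sin_nonneg_of_nonneg_of_le_pi (by linarith) (by linarith [pi_pos])
  have hx : sin β ≤ 1 / 2 := by
    rw [← sin_pi_div_six]
    exact sin_le_sin_of_le_of_le_pi_div_two (by linarith [pi_pos]) (by linarith [pi_pos])
      (by linarith)
  have hy₀ : 0 ≤ cos β := cos_nonneg_of_mem_Icc ⟨by linarith [pi_pos], by linarith⟩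
  have hy₁ : cos β ≤ 1 := cos_le_one β
  have hxy : sin β ^ 2 + cos β ^ 2 = 1 := sin_sq_add_cos_sq β
  refine ⟨?_, ?_, ?_, ?_⟩ <;>
    simp only [hβ', hβρ, sin_pi_div_two_sub, cos_pi_div_two_sub, cos_two_mul, sin_two_mul, cos_sq']
  · exact hx₀
  · nlinarith
  · nlinarith
  · set x := sin β
    set y := cos β
    -- `(1 - 2x²)² - x² · (…) = y² (1 - 8x² + 4x⁴ + 8x³y)`, and `y ≥ y² = 1 - x²` gives
    -- `1 - 8x² + 4x⁴ + 8x³y ≥ (1 - 2x)((1 - 2x²)² + 2x) ≥ 0`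
    have hG : 0 ≤ 1 - 8 * x ^ 2 + 4 * x ^ 4 + 8 * x ^ 3 * y := by
      have hy : 1 - x ^ 2 ≤ y := by nlinarith
      nlinarith [mul_nonneg (pow_nonneg hx₀ 3) (sub_nonneg.2 hy),
        mul_nonneg (by linarith : 0 ≤ 1 - 2 * x)
          (by positivity : 0 ≤ (1 - 2 * x ^ 2) ^ 2 + 2 * x)]
    nlinarith [mul_nonneg (sq_nonneg y) hG]

theorem stmt_6 {d : ℕ} {ρ h ρ' h' : ℝ} (hρ : ρ ∈ Set.Ioc 0 Real.pi) (hh : 0 < h)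
    (hh' : h' = h / 2 * Real.sin (ρ / 2))
    (hρ' : ρ' = if ρ > Real.pi / 3 then (Real.pi - ρ) / 2 else ρ)
    (u ξ : EuclideanSpace ℝ (Fin d)) (hξ : ‖ξ‖ = 1)
    (z : EuclideanSpace ℝ (Fin d)) (hz : z ∈ frontier (fcone d ρ h u ξ)) :
    ∃ ν : EuclideanSpace ℝ (Fin d), ‖ν‖ = 1 ∧ fcone d ρ' h' z ν ⊆ fcone d ρ h u ξ := by
  obtain ⟨hρ₀, hρπ⟩ := hρ
  have hc : 0 ≤ cos (ρ / 2) := cos_nonneg_of_mem_Icc ⟨by linarith [pi_pos], by linarith⟩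
  have hs : 0 < sin (ρ / 2) := sin_pos_of_pos_of_lt_pi (by linarith) (by linarith)
  have hfit : ApertureFits ρ ρ' := by
    split_ifs at hρ' with hbig <;> subst hρ'
    · exact apertureFits_pi_sub_div_two hbig.le hρπ
    · exact apertureFits_self hρ₀.le (not_lt.1 hbig)
  exact exists_fcone_subset_of_mem_frontier hc hs hh hh'.le hfit hξ hz

end
end

section
/- Let S_n be a sequence of compact ρ,h-cone-convex subsets of ℝ^d and S a compact set with nonempty boundary such that d_H(S_n, S) → 0 in Hausdorff distance. Then d_H(∂S_n, ∂S) → 0. -/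
/-!
Near a point `x ∈ ∂S` there are points outside `S`, which are eventually outside `Sₙ`, and points
of `Sₙ`; the segment joining two such points crosses `∂Sₙ` close to `x`. Since the functions
`infDist · ∂Sₙ` are 1-Lipschitz and `∂S` is compact, this is uniform in `x`.

Conversely, at `y ∈ ∂Sₙ` the cone lying outside `Sₙ` contains a ball whose radius depends only on
`ρ`, `h` and the target precision. Once `d_H(Sₙ, S)` is below that radius, the centre of the ball
lies outside `S`, while `y` has points of `S` nearby, so a segment crosses `∂S` close to `y`.
-/

open MeasureTheory Metric Set Filter

noncomputable section

open Topology

theorem IsPreconnected.inter_frontier_nonempty {X : Type*} [TopologicalSpace X] {t A : Set X}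
    (ht : IsPreconnected t) (hA : (t ∩ A).Nonempty) (hAc : (t \ A).Nonempty) :
    (t ∩ frontier A).Nonempty := by
  by_contra hemp
  have hsub : t ⊆ interior A ∪ (closure A)ᶜ := fun x hx =>
    (em (x ∈ interior A)).imp_right fun hi hc => hemp ⟨x, hx, hc, hi⟩
  rcases ht.subset_or_subset isOpen_interior isClosed_closure.isOpen_compl
      (disjoint_compl_right.mono_left interior_subset_closure) hsub with hint | hext
  · obtain ⟨x, hxt, hxA⟩ := hAc
    exact hxA (interior_subset (hint hxt))
  · obtain ⟨x, hxt, hxA⟩ := hA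
    exact hext hxt (subset_closure hxA)

theorem infDist_frontier_lt_of_mem_of_notMem {E : Type*} [NormedAddCommGroup E]
    [NormedSpace ℝ E] {A : Set E} {x a b : E} {r : ℝ} (ha : a ∈ A) (hb : b ∉ A)
    (hax : dist a x < r) (hbx : dist b x < r) : infDist x (frontier A) < r := by
  obtain ⟨w, hw, hwA⟩ := (convex_segment a b).isPreconnected.inter_frontier_nonempty
    ⟨a, left_mem_segment ℝ a b, ha⟩ ⟨b, right_mem_segment ℝ a b, hb⟩
  have hwx : w ∈ ball x r := (convex_ball x r).segment_subset hax hbx hw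
  calc infDist x (frontier A) ≤ dist x w := infDist_le_dist_of_mem hwA
    _ < r := by rw [dist_comm]; exact hwx

theorem IsCompact.eventually_forall_infDist_lt {α ι : Type*} [PseudoMetricSpace α] {K : Set α}
    (hK : IsCompact K) {l : Filter ι} {t : ι → Set α}
    (h : ∀ x ∈ K, ∀ ε > 0, ∀ᶠ i in l, infDist x (t i) < ε) {ε : ℝ} (hε : 0 < ε) :
    ∀ᶠ i in l, ∀ x ∈ K, infDist x (t i) < ε := by
  have hnear : {p : ι × α | infDist p.2 (t p.1) < ε} ∈ l ×ˢ 𝓝ˢ K := by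
    refine hK.mem_prod_nhdsSet_of_forall fun x hx => ?_
    filter_upwards [prod_mem_prod (h x hx _ (half_pos hε)) (ball_mem_nhds x (half_pos hε))]
      with ⟨i, y⟩ ⟨hi, hy⟩
    calc infDist y (t i) ≤ infDist x (t i) + dist y x := infDist_le_infDist_add_dist
      _ < ε := by linarith [show infDist x (t i) < ε / 2 from hi, show dist y x < ε / 2 from hy]
  exact Eventually.curry hnear |>.mono fun _ hi => hi.self_of_nhdsSet

theorem eventually_infDist_frontier_lt {E ι : Type*} [NormedAddCommGroup E] [NormedSpace ℝ E]
    {l : Filter ι} {T : ι → Set E} {S : Set E} (hS : IsClosed S)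
    (hfin : ∀ i, hausdorffEDist (T i) S ≠ ⊤)
    (hconv : Tendsto (fun i => hausdorffDist (T i) S) l (𝓝 0))
    {x : E} (hx : x ∈ frontier S) {ε : ℝ} (hε : 0 < ε) :
    ∀ᶠ i in l, infDist x (frontier (T i)) < ε := by
  have hxS : x ∈ S := hS.frontier_subset hx
  obtain ⟨z, hzS, hxz⟩ : ∃ z ∈ Sᶜ, dist x z < ε :=
    mem_closure_iff.1 (frontier_subset_closure (frontier_compl S ▸ hx)) ε hε
  have hzS_pos : 0 < infDist z S := (hS.notMem_iff_infDist_pos ⟨x, hxS⟩).1 hzS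
  filter_upwards [hconv.eventually (gt_mem_nhds (lt_min hzS_pos hε))] with i hi
  obtain ⟨a, haT, hax⟩ :=
    exists_dist_lt_of_hausdorffDist_lt' hxS (hi.trans_le (min_le_right _ _)) (hfin i)
  have hzT : z ∉ T i := fun hz =>
    (infDist_le_hausdorffDist_of_mem hz (hfin i)).not_gt (hi.trans_le (min_le_left _ _))
  exact infDist_frontier_lt_of_mem_of_notMem haT hzT hax (by rwa [dist_comm])

section Cone

variable {d : ℕ} {ρ h : ℝ}

theorem ball_subset_fcone_s8 {y ξ : EuclideanSpace ℝ (Fin d)} (hξ : ‖ξ‖ = 1) {t δ : ℝ}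
    (hδ : 0 < δ) (hκ : 0 ≤ Real.cos (ρ / 2)) (htδ : Real.cos (ρ / 2) * (t + δ) < t - δ)
    (hth : t + δ ≤ h) : ball (y + t • ξ) δ ⊆ fcone d ρ h y ξ := by
  intro z hz
  have ht : δ < t := by nlinarith [Real.cos_le_one (ρ / 2)]
  have hw : ‖z - y - t • ξ‖ < δ := by rwa [mem_ball, dist_eq_norm, ← sub_sub] at hz
  have hinner : t - δ < inner ℝ ξ (z - y) := by
    have hξξ : inner ℝ ξ ξ = (1 : ℝ) := by rw [real_inner_self_eq_norm_sq, hξ, one_pow]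
    have hsplit : inner ℝ ξ (z - y) = inner ℝ ξ (z - y - t • ξ) + t := by
      simp only [inner_sub_right, real_inner_smul_right, hξξ]; ring
    have hcs := abs_le.1 ((abs_real_inner_le_norm ξ (z - y - t • ξ)).trans_eq (by rw [hξ, one_mul]))
    linarith [hcs.1]
  have hnorm : ‖z - y‖ < t + δ :=
    calc ‖z - y‖ = ‖(z - y - t • ξ) + t • ξ‖ := by rw [sub_add_cancel]
      _ ≤ ‖z - y - t • ξ‖ + t := by
        grw [norm_add_le, norm_smul, hξ, mul_one, Real.norm_of_nonneg (by linarith)]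
      _ < t + δ := by linarith
  have hpos : 0 < ‖z - y‖ := by
    linarith [(real_inner_le_norm ξ (z - y)).trans_eq (by rw [hξ, one_mul])]
  refine ⟨⟨sub_ne_zero.1 (norm_pos_iff.1 hpos), ?_⟩, ?_⟩
  · show Real.cos (ρ / 2) < inner ℝ ξ (‖z - y‖⁻¹ • (z - y))
    rw [real_inner_smul_right, inv_mul_eq_div, lt_div_iff₀ hpos]
    calc Real.cos (ρ / 2) * ‖z - y‖ ≤ Real.cos (ρ / 2) * (t + δ) := by gcongr
      _ < inner ℝ ξ (z - y) := htδ.trans hinner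
  · rw [mem_ball, dist_eq_norm]
    linarith

theorem exists_ball_subset_fcone (hρ : ρ ∈ Ioc 0 Real.pi) {r : ℝ} (hr : 0 < r) (hrh : r ≤ h) :
    ∃ δ > 0, δ ≤ r ∧ ∀ y ξ : EuclideanSpace ℝ (Fin d), ‖ξ‖ = 1 →
      ball (y + (r / 2) • ξ) δ ⊆ fcone d ρ h y ξ := by
  have hκ0 : 0 ≤ Real.cos (ρ / 2) :=
    Real.cos_nonneg_of_mem_Icc ⟨by linarith [Real.pi_pos, hρ.1], by linarith [hρ.2]⟩
  have hκ1 : Real.cos (ρ / 2) < 1 := by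
    simpa [Real.cos_zero] using Real.cos_lt_cos_of_nonneg_of_le_pi le_rfl
      (by linarith [hρ.2, Real.pi_pos]) (by linarith [hρ.1] : 0 < ρ / 2)
  refine ⟨r * (1 - Real.cos (ρ / 2)) / 8, by nlinarith, by nlinarith, fun y ξ hξ => ?_⟩
  -- with `δ = r (1 - κ) / 8`, `κ = cos (ρ / 2)`: `r / 2 - δ - κ (r / 2 + δ) = r (1 - κ) (3 - κ) / 8`
  have hgap := mul_pos (mul_pos hr (sub_pos.2 hκ1)) (by linarith : (0 : ℝ) < 3 - Real.cos (ρ / 2))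
  exact ball_subset_fcone_s8 hξ (by nlinarith) hκ0 (by linarith) (by nlinarith)

theorem ConeConvex.infDist_frontier_lt {T S : Set (EuclideanSpace ℝ (Fin d))}
    (hT : ConeConvex d ρ h T) (hTc : IsClosed T) {r δ : ℝ}
    (hcone : ∀ y ξ : EuclideanSpace ℝ (Fin d), ‖ξ‖ = 1 →
      ball (y + (r / 2) • ξ) δ ⊆ fcone d ρ h y ξ)
    (hr : 0 < r) (hδr : δ ≤ r) (hTS : hausdorffDist T S < δ) (hfin : hausdorffEDist T S ≠ ⊤)
    {y : EuclideanSpace ℝ (Fin d)} (hy : y ∈ frontier T) : infDist y (frontier S) < r := by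
  obtain ⟨ξ, hξ, hξT⟩ := hT y hy
  obtain ⟨s, hsS, hys⟩ :=
    exists_dist_lt_of_hausdorffDist_lt (hTc.frontier_subset hy) (hTS.trans_le hδr) hfin
  have hcS : y + (r / 2) • ξ ∉ S := fun hc => by
    obtain ⟨p, hpT, hpc⟩ := exists_dist_lt_of_hausdorffDist_lt' hc hTS hfin
    exact hξT (hcone y ξ hξ hpc) hpT
  have hcy : dist (y + (r / 2) • ξ) y < r := by
    rw [dist_eq_norm, add_sub_cancel_left, norm_smul, hξ, mul_one,
      Real.norm_of_nonneg (by positivity)]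
    linarith
  exact infDist_frontier_lt_of_mem_of_notMem hsS hcS (by rwa [dist_comm]) hcy

end Cone

theorem stmt_8 {d : ℕ} {ρ h : ℝ} (hρ : ρ ∈ Set.Ioc 0 Real.pi) (hh : 0 < h)
    (Sn : ℕ → Set (EuclideanSpace ℝ (Fin d)))
    (hSn : ∀ n, IsCompact (Sn n)) (hSne : ∀ n, (Sn n).Nonempty)
    (hcc : ∀ n, ConeConvex d ρ h (Sn n))
    (S : Set (EuclideanSpace ℝ (Fin d))) (hS : IsCompact S)
    (hfr : (frontier S).Nonempty)
    (hconv : Tendsto (fun n => Metric.hausdorffDist (Sn n) S) atTop (nhds 0)) :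
    Tendsto (fun n => Metric.hausdorffDist (frontier (Sn n)) (frontier S)) atTop (nhds 0) := by
  have hfin : ∀ n, hausdorffEDist (Sn n) S ≠ ⊤ := fun n =>
    hausdorffEDist_ne_top_of_nonempty_of_bounded (hSne n) (hfr.mono hS.isClosed.frontier_subset)
      (hSn n).isBounded hS.isBounded
  refine tendsto_order.2 ⟨fun a ha => .of_forall fun n => ha.trans_le hausdorffDist_nonneg,
    fun ε hε => ?_⟩
  have hε2 : 0 < ε / 2 := half_pos hε
  obtain ⟨δ, hδ, hδr, hcone⟩ :=
    exists_ball_subset_fcone (d := d) hρ (lt_min hε2 hh) (min_le_right _ h)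
  have hfrS : IsCompact (frontier S) :=
    hS.of_isClosed_subset isClosed_frontier hS.isClosed.frontier_subset
  have hnear : ∀ᶠ n in atTop, ∀ x ∈ frontier S, infDist x (frontier (Sn n)) < ε / 2 :=
    hfrS.eventually_forall_infDist_lt
      (fun x hx _ => eventually_infDist_frontier_lt hS.isClosed hfin hconv hx) hε2
  filter_upwards [hnear, hconv.eventually (gt_mem_nhds hδ)] with n hnS hnδ
  refine (hausdorffDist_le_of_infDist hε2.le (fun y hy => ?_) fun x hx => (hnS x hx).le).trans_lt
    (half_lt_self hε)
  exact ((hcc n).infDist_frontier_lt (hSn n).isClosed hcone (lt_min hε2 hh) hδr hnδ (hfin n)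
    hy).le.trans (min_le_left _ _)
end
end
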